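/- Let X be centered with E[X²] < ∞, S(n) the random walk, and (ℓ_k) the strictly descending ladder epochs of S (ℓ₀ = 0, ℓ_k = min{n : S(n) < S(ℓ_{k-1})}). For x > 0 let U(x) = Σ_{k≥0} P[S(ℓ_k) ∈ (−x, 0]] (the potential kernel, which is finite). Then for each m > 0, t > 0 and 0 < x ≤ m: P[x + S(τ_x) < −t] ≤ U(m)·P[S(ℓ₁) < −t]. -/

import Mathlib

/-!
On the event of the theorem let `ℓ_k` be the last strict descending ladder epoch before the exit
time `τ_x`. Then `S(ℓ_k) ∈ (-x, 0]` and `τ_x = ℓ_{k+1}`, so, as `S(ℓ_k) > -x`, the overshoot is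
at most the first ladder height `S(ℓ_{k+1}) - S(ℓ_k)` of the walk restarted at `ℓ_k`. The event
`{ℓ_k = j}` depends only on `X_0, …, X_{j-1}`, so the walk restarted at `j` is independent of it
and distributed as the original walk. Summing over `j` and `k` bounds the probability by
`Σ_k P[S(ℓ_k) ∈ (-x, 0]] · P[S(ℓ₁) < -t] ≤ U(m) · P[S(ℓ₁) < -t]`.
-/

open MeasureTheory ProbabilityTheory Filter Set
open scoped ENNReal NNReal

noncomputable def partialSum {Ω : Type*} (X : ℕ → Ω → ℝ) (n : ℕ) (ω : Ω) : ℝ :=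
  ∑ i ∈ Finset.range n, X i ω

noncomputable def exitTime {Ω : Type*} (X : ℕ → Ω → ℝ) (x : ℝ) (ω : Ω) : ℕ∞ :=
  sInf {n : ℕ∞ | ∃ m : ℕ, (m : ℕ∞) = n ∧ 1 ≤ m ∧ x + partialSum X m ω ≤ 0}

/-- Strictly descending ladder epochs: `ℓ₀ = 0`, `ℓ_{k+1} = inf {n : S(n) < S(ℓ_k)}`. -/
noncomputable def ladderEpoch {Ω : Type*} (X : ℕ → Ω → ℝ) : ℕ → Ω → ℕ
  | 0 => fun _ => 0
  | k + 1 => fun ω => sInf {n : ℕ | partialSum X n ω < partialSum X (ladderEpoch X k ω) ω}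

/-- The potential kernel `U(x) = Σ_{k≥0} P[S(ℓ_k) ∈ (−x, 0]]`. -/
noncomputable def potentialU {Ω : Type*} [MeasureSpace Ω] (X : ℕ → Ω → ℝ) (x : ℝ) : ℝ≥0∞ :=
  ∑' k : ℕ, ℙ {ω | partialSum X (ladderEpoch X k ω) ω ∈ Set.Ioc (-x) 0}

section Pathwise

variable {Ω : Type*}

noncomputable def ladderHeight (X : ℕ → Ω → ℝ) (k : ℕ) (ω : Ω) : ℝ :=
  partialSum X (ladderEpoch X k ω) ω

/-- When no further strict descent occurs, `sInf ∅ = 0` restarts the epochs at `0`;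
this predicate rules that out for the first `k` epochs. -/
def LadderDescends (X : ℕ → Ω → ℝ) (ω : Ω) (k : ℕ) : Prop :=
  ∀ i < k, ladderHeight X (i + 1) ω < ladderHeight X i ω

variable {X : ℕ → Ω → ℝ} {ω : Ω}

@[simp]
lemma partialSum_zero : partialSum X 0 ω = 0 := by simp [partialSum]

lemma partialSum_shift (j q : ℕ) :
    partialSum (fun i => X (j + i)) q ω = partialSum X (j + q) ω - partialSum X j ω := by
  simp [partialSum, Finset.sum_range_add]

lemma partialSum_congr {Y : ℕ → Ω → ℝ} {j : ℕ} (h : ∀ i < j, X i ω = Y i ω) {p : ℕ} (hp : p ≤ j) :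
    partialSum X p ω = partialSum Y p ω :=
  Finset.sum_congr rfl fun i hi => h i ((Finset.mem_range.1 hi).trans_le hp)

lemma LadderDescends.mono {k k' : ℕ} (h : LadderDescends X ω k) (hk : k' ≤ k) :
    LadderDescends X ω k' := fun i hi => h i (hi.trans_le hk)

lemma LadderDescends.isLeast {k : ℕ} (h : LadderDescends X ω (k + 1)) :
    IsLeast {n | partialSum X n ω < ladderHeight X k ω} (ladderEpoch X (k + 1) ω) :=
  isLeast_csInf ⟨_, h k k.lt_succ_self⟩

lemma ladderHeight_le_partialSum {k p : ℕ} (h : LadderDescends X ω k)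
    (hp : p ≤ ladderEpoch X k ω) : ladderHeight X k ω ≤ partialSum X p ω := by
  cases k with
  | zero => simp_all [ladderHeight, ladderEpoch]
  | succ k =>
    rcases hp.eq_or_lt with rfl | hp
    · rfl
    · exact (h k k.lt_succ_self).le.trans (not_lt.1 fun hlt => hp.not_ge (h.isLeast.2 hlt))

lemma ladderHeight_nonpos {k : ℕ} (h : LadderDescends X ω k) : ladderHeight X k ω ≤ 0 := by
  simpa using ladderHeight_le_partialSum h (Nat.zero_le _)

lemma ladderEpoch_lt_succ {k : ℕ} (h : LadderDescends X ω (k + 1)) :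
    ladderEpoch X k ω < ladderEpoch X (k + 1) ω :=
  not_le.1 fun hle =>
    (h k k.lt_succ_self).not_ge (ladderHeight_le_partialSum (h.mono k.le_succ) hle)

lemma le_ladderEpoch {k : ℕ} (h : LadderDescends X ω k) : k ≤ ladderEpoch X k ω := by
  induction k with
  | zero => exact le_rfl
  | succ k ih => exact (ih (h.mono k.le_succ)).trans_lt (ladderEpoch_lt_succ h)

lemma exists_ladderEpoch_succ_eq {n : ℕ} (hn : 0 < n)
    (hrec : ∀ p < n, partialSum X n ω < partialSum X p ω) :
    ∃ k, LadderDescends X ω (k + 1) ∧ ladderEpoch X (k + 1) ω = n := by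
  by_contra! hne
  have hbelow : ∀ k, LadderDescends X ω k ∧ ladderEpoch X k ω < n := by
    intro k
    induction k with
    | zero => exact ⟨fun i hi => absurd hi i.not_lt_zero, hn⟩
    | succ k ih =>
      have hmem : n ∈ {p | partialSum X p ω < ladderHeight X k ω} := hrec _ ih.2
      have hdesc : LadderDescends X ω (k + 1) := fun i hi => by
        rcases Nat.lt_succ_iff_lt_or_eq.1 hi with hi | rfl
        · exact ih.1 i hi
        · exact Nat.sInf_mem ⟨n, hmem⟩
      exact ⟨hdesc, (Nat.sInf_le hmem).lt_of_ne (hne k hdesc)⟩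
  exact (hbelow n).2.not_ge (le_ladderEpoch (hbelow n).1)

lemma ladderEpoch_shift_one {k : ℕ} (h : LadderDescends X ω (k + 1)) :
    ladderEpoch (fun i => X (ladderEpoch X k ω + i)) 1 ω
      = ladderEpoch X (k + 1) ω - ladderEpoch X k ω := by
  have hlt := ladderEpoch_lt_succ h
  refine IsLeast.csInf_eq ⟨?_, fun q hq => ?_⟩
  · show partialSum _ _ ω < partialSum _ 0 ω
    rw [partialSum_shift, partialSum_zero, Nat.add_sub_cancel' hlt.le]
    exact sub_neg.2 (h k k.lt_succ_self)
  · replace hq : partialSum _ q ω < partialSum _ 0 ω := hq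
    rw [partialSum_shift, partialSum_zero, sub_neg] at hq
    have := h.isLeast.2 hq
    omega

lemma ladderHeight_shift_one {k : ℕ} (h : LadderDescends X ω (k + 1)) :
    ladderHeight (fun i => X (ladderEpoch X k ω + i)) 1 ω
      = ladderHeight X (k + 1) ω - ladderHeight X k ω := by
  rw [ladderHeight, ladderEpoch_shift_one h, partialSum_shift,
    Nat.add_sub_cancel' (ladderEpoch_lt_succ h).le, ladderHeight, ladderHeight]

lemma exists_exitTime_eq {x : ℝ} (h : exitTime X x ω ≠ ⊤) :
    ∃ n : ℕ, exitTime X x ω = n ∧ 1 ≤ n ∧ x + partialSum X n ω ≤ 0 ∧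
      ∀ p, 1 ≤ p → p < n → 0 < x + partialSum X p ω := by
  have hne : {n : ℕ∞ | ∃ m : ℕ, (m : ℕ∞) = n ∧ 1 ≤ m ∧ x + partialSum X m ω ≤ 0}.Nonempty :=
    Set.nonempty_iff_ne_empty.2 fun he => h (by rw [exitTime, he, sInf_empty])
  obtain ⟨n, hn, hn1, hexit⟩ := csInf_mem hne
  refine ⟨n, hn.symm, hn1, hexit, fun p hp1 hpn => not_le.1 fun hp => ?_⟩
  have : (n : ℕ∞) ≤ p := hn.trans_le (sInf_le ⟨p, rfl, hp1, hp⟩)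
  exact hpn.not_ge (by exact_mod_cast this)

end Pathwise

section Events

variable {Ω : Type*}

def ladderEvent (X : ℕ → Ω → ℝ) (x : ℝ) (k j : ℕ) : Set Ω :=
  {ω | LadderDescends X ω k ∧ ladderEpoch X k ω = j ∧ partialSum X j ω ∈ Ioc (-x) 0}

variable {X Y : ℕ → Ω → ℝ} {ω : Ω} {j : ℕ}

lemma LadderDescends.of_eq_of_ladderEpoch_le (hXY : ∀ i < j, X i ω = Y i ω) {k : ℕ}
    (h : LadderDescends X ω k) (hj : ladderEpoch X k ω ≤ j) :
    LadderDescends Y ω k ∧ ladderEpoch Y k ω = ladderEpoch X k ω := by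
  have hS : ∀ p ≤ j, partialSum Y p ω = partialSum X p ω :=
    fun p hp => (partialSum_congr hXY hp).symm
  induction k with
  | zero => exact ⟨fun i hi => absurd hi i.not_lt_zero, rfl⟩
  | succ k ih =>
    have hlt := ladderEpoch_lt_succ h
    obtain ⟨hdescY, hepoch⟩ := ih (h.mono k.le_succ) (hlt.le.trans hj)
    have hheight : ladderHeight Y k ω = ladderHeight X k ω := by
      rw [ladderHeight, hepoch, hS _ (hlt.le.trans hj)]; rfl
    have hepoch' : ladderEpoch Y (k + 1) ω = ladderEpoch X (k + 1) ω := by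
      refine IsLeast.csInf_eq ⟨?_, fun q hq => not_lt.1 fun hqlt => ?_⟩
      · show partialSum Y _ ω < ladderHeight Y k ω
        rw [hS _ hj, hheight]
        exact h.isLeast.1
      · replace hq : partialSum Y q ω < ladderHeight Y k ω := hq
        rw [hS _ (hqlt.le.trans hj), hheight] at hq
        exact hqlt.not_ge (h.isLeast.2 hq)
    refine ⟨fun i hi => ?_, hepoch'⟩
    rcases Nat.lt_succ_iff_lt_or_eq.1 hi with hi | rfl
    · exact hdescY i hi
    · rw [hheight, ladderHeight, hepoch', hS _ hj]
      exact h i hi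

lemma mem_ladderEvent_of_eq {x : ℝ} {k : ℕ} (hXY : ∀ i < j, X i ω = Y i ω)
    (hω : ω ∈ ladderEvent X x k j) : ω ∈ ladderEvent Y x k j := by
  obtain ⟨hdesc, hepoch, hheight⟩ := hω
  obtain ⟨hdescY, hepochY⟩ := hdesc.of_eq_of_ladderEpoch_le hXY hepoch.le
  exact ⟨hdescY, hepochY.trans hepoch, partialSum_congr hXY le_rfl ▸ hheight⟩

lemma mem_ladderEvent_congr {x : ℝ} {k : ℕ} (hXY : ∀ i < j, X i ω = Y i ω) :
    ω ∈ ladderEvent X x k j ↔ ω ∈ ladderEvent Y x k j :=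
  ⟨mem_ladderEvent_of_eq hXY, mem_ladderEvent_of_eq fun i hi => (hXY i hi).symm⟩

lemma iUnion_ladderEvent_subset {x m : ℝ} (hxm : x ≤ m) (k : ℕ) :
    ⋃ j, ladderEvent X x k j ⊆ {ω | ladderHeight X k ω ∈ Ioc (-m) 0} := by
  simp only [Set.iUnion_subset_iff]
  rintro j ω ⟨-, rfl, hlow, hhigh⟩
  exact ⟨(neg_le_neg hxm).trans_lt hlow, hhigh⟩

lemma pairwise_disjoint_ladderEvent (x : ℝ) (k : ℕ) :
    Pairwise (Function.onFun Disjoint (ladderEvent X x k)) :=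
  fun _ _ hne => Set.disjoint_left.2 fun _ h h' => hne (h.2.1.symm.trans h'.2.1)

lemma overshoot_subset_iUnion_ladderEvent {x : ℝ} (hx : 0 < x) (t : ℝ) :
    {ω | exitTime X x ω ≠ ⊤ ∧ x + partialSum X (exitTime X x ω).toNat ω < -t} ⊆
      ⋃ k, ⋃ j, ladderEvent X x k j ∩ {ω | ladderHeight (fun i => X (j + i)) 1 ω < -t} := by
  rintro ω ⟨hfin, hover⟩
  obtain ⟨n, hτ, hn, hexit, hbefore⟩ := exists_exitTime_eq hfin
  rw [hτ, ENat.toNat_natCast] at hover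
  have habove : ∀ p < n, -x < partialSum X p ω := fun p hp => by
    rcases Nat.eq_zero_or_pos p with rfl | hp0
    · simpa using hx
    · linarith [hbefore p hp0 hp]
  obtain ⟨k, hdesc, hk⟩ :=
    exists_ladderEpoch_succ_eq hn fun p hp => by linarith [habove p hp]
  have hlt : ladderEpoch X k ω < n := hk ▸ ladderEpoch_lt_succ hdesc
  refine Set.mem_iUnion₂.2 ⟨k, ladderEpoch X k ω,
    ⟨hdesc.mono k.le_succ, rfl, habove _ hlt, ladderHeight_nonpos (hdesc.mono k.le_succ)⟩, ?_⟩
  show ladderHeight _ 1 ω < -t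
  rw [ladderHeight_shift_one hdesc, ladderHeight, ladderHeight, hk]
  linarith [habove _ hlt]

end Events

section Measurability

variable {Ω : Type*} {mΩ : MeasurableSpace Ω}

lemma measurable_sInf_setOf {P : ℕ → Ω → Prop} (hP : ∀ n, MeasurableSet {ω | P n ω}) :
    Measurable fun ω => sInf {n | P n ω} := by
  classical
  have hex : ∀ ω, ∃ n, P n ω ∨ ∀ m, ¬P m ω := fun ω =>
    (em (∃ n, P n ω)).elim (fun ⟨n, hn⟩ => ⟨n, .inl hn⟩) fun hn => ⟨0, .inr (not_exists.1 hn)⟩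
  have hmeas : ∀ n, MeasurableSet {ω | P n ω ∨ ∀ m, ¬P m ω} := fun n => by
    have : {ω | P n ω ∨ ∀ m, ¬P m ω} = {ω | P n ω} ∪ ⋂ m, {ω | P m ω}ᶜ := by ext; simp
    exact this ▸ (hP n).union (.iInter fun m => (hP m).compl)
  convert measurable_find hex hmeas using 1
  funext ω
  by_cases hω : ∃ n, P n ω
  · rw [Nat.sInf_def (s := {n | P n ω}) hω]
    refine ((Nat.find_eq_iff _).2 ⟨.inl (Nat.find_spec hω), fun m hm => ?_⟩).symm
    rintro (hPm | hnone)
    exacts [Nat.find_min hω hm hPm, hnone _ (Nat.find_spec hω)]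
  · have hempty : {n | P n ω} = ∅ := Set.eq_empty_of_forall_notMem fun n hn => hω ⟨n, hn⟩
    rw [(Nat.sInf_eq_zero (s := {n | P n ω})).2 (.inr hempty)]
    exact ((Nat.find_eq_zero _).2 (.inr (not_exists.1 hω))).symm

variable {X : ℕ → Ω → ℝ} (hX : ∀ n, Measurable (X n))
include hX

lemma measurable_partialSum (n : ℕ) : Measurable (partialSum X n) :=
  Finset.measurable_sum _ fun i _ => hX i

lemma Measurable.partialSum_apply {τ : Ω → ℕ} (hτ : Measurable τ) :
    Measurable fun ω => partialSum X (τ ω) ω :=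
  have hjoint : Measurable fun p : Ω × ℕ => partialSum X p.2 p.1 :=
    measurable_from_prod_countable_left fun n => measurable_partialSum hX n
  hjoint.comp (measurable_id.prodMk hτ)

lemma measurable_ladderEpoch (k : ℕ) : Measurable (ladderEpoch X k) := by
  induction k with
  | zero => exact measurable_const
  | succ k ih =>
    exact measurable_sInf_setOf fun n =>
      measurableSet_lt (measurable_partialSum hX n) (ih.partialSum_apply hX)

lemma measurable_ladderHeight (k : ℕ) : Measurable (ladderHeight X k) :=
  (measurable_ladderEpoch hX k).partialSum_apply hX

lemma measurableSet_ladderEvent (x : ℝ) (k j : ℕ) : MeasurableSet (ladderEvent X x k j) := by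
  have hdesc : MeasurableSet {ω | LadderDescends X ω k} := by
    simp only [LadderDescends, Set.ofPred_forall]
    exact .iInter fun i => .iInter fun _ =>
      measurableSet_lt (measurable_ladderHeight hX _) (measurable_ladderHeight hX _)
  exact hdesc.inter ((measurable_ladderEpoch hX k (measurableSet_singleton j)).inter
    (measurable_partialSum hX j measurableSet_Ioc))

end Measurability

section Law

variable {Ω : Type*} {mΩ : MeasurableSpace Ω} {μ : Measure Ω}

lemma measurableSet_ladderEvent_of_lt {X : ℕ → Ω → ℝ} {j : ℕ} (hX : ∀ i < j, Measurable (X i))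
    (x : ℝ) (k : ℕ) : MeasurableSet (ladderEvent X x k j) := by
  set Y : ℕ → Ω → ℝ := fun i => if i < j then X i else 0
  have hY : ∀ i, Measurable (Y i) := fun i => by
    by_cases hi : i < j
    · simpa [Y, hi] using hX i hi
    · simp only [Y, if_neg hi]
      exact measurable_zero
  have hXY : ladderEvent X x k j = ladderEvent Y x k j :=
    Set.ext fun ω => mem_ladderEvent_congr fun i hi => by simp [Y, hi]
  exact hXY ▸ measurableSet_ladderEvent hY x k j

lemma ladderEpoch_eval (X : ℕ → Ω → ℝ) (ω : Ω) (k : ℕ) :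
    ladderEpoch (fun i (u : ℕ → ℝ) => u i) k (fun i => X i ω) = ladderEpoch X k ω := by
  induction k with
  | zero => rfl
  | succ k ih =>
    show sInf _ = sInf _
    rw [ih]
    rfl

lemma measure_ladderHeight_mem_eq_of_map_eq {X Y : ℕ → Ω → ℝ} (hX : ∀ n, Measurable (X n))
    (hY : ∀ n, Measurable (Y n)) (hlaw : μ.map (fun ω i => X i ω) = μ.map (fun ω i => Y i ω))
    (k : ℕ) {s : Set ℝ} (hs : MeasurableSet s) :
    μ {ω | ladderHeight X k ω ∈ s} = μ {ω | ladderHeight Y k ω ∈ s} := by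
  have hpre : ∀ Z : ℕ → Ω → ℝ, {ω | ladderHeight Z k ω ∈ s} =
      (fun ω i => Z i ω) ⁻¹' {u | ladderHeight (fun i (u : ℕ → ℝ) => u i) k u ∈ s} := by
    intro Z
    ext ω
    simp only [Set.mem_preimage, Set.mem_ofPred_eq, ladderHeight, ladderEpoch_eval]
    rfl
  have hD : MeasurableSet {u | ladderHeight (fun i (u : ℕ → ℝ) => u i) k u ∈ s} :=
    measurable_ladderHeight measurable_pi_apply k hs
  rw [hpre, hpre, ← Measure.map_apply (measurable_pi_lambda _ hX) hD, hlaw,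
    Measure.map_apply (measurable_pi_lambda _ hY) hD]

variable {X : ℕ → Ω → ℝ} {X0 : Ω → ℝ} (hmeas : ∀ n, Measurable (X n))
  (hindep : iIndepFun X μ) (hident : ∀ n, IdentDistrib (X n) X0 μ μ)
include hmeas hindep hident

lemma map_precomp_eq_of_identDistrib {g : ℕ → ℕ} (hg : g.Injective) :
    μ.map (fun ω i => X (g i) ω) = μ.map (fun ω i => X i ω) := by
  rw [(hindep.precomp hg).map_fun_eq_infinitePi_map fun i => hmeas _,
    hindep.map_fun_eq_infinitePi_map hmeas]
  congr 1
  funext i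
  rw [(hident _).map_eq, (hident i).map_eq]

lemma measure_ladderEvent_inter_shift (x : ℝ) (k j : ℕ) {s : Set ℝ} (hs : MeasurableSet s) :
    μ (ladderEvent X x k j ∩ {ω | ladderHeight (fun i => X (j + i)) 1 ω ∈ s}) =
      μ (ladderEvent X x k j) * μ {ω | ladderHeight X 1 ω ∈ s} := by
  let F : ℕ → MeasurableSpace Ω := fun i => (inferInstance : MeasurableSpace ℝ).comap (X i)
  have hpast : MeasurableSet[⨆ i ∈ Iio j, F i] (ladderEvent X x k j) :=
    measurableSet_ladderEvent_of_lt
      (fun i hi => (comap_measurable (X i)).mono (le_biSup F (Set.mem_Iio.2 hi)) le_rfl) x k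
  have hfuture : MeasurableSet[⨆ i ∈ Ici j, F i]
      {ω | ladderHeight (fun i => X (j + i)) 1 ω ∈ s} :=
    measurable_ladderHeight (fun i => (comap_measurable (X (j + i))).mono
      (le_biSup F (Set.mem_Ici.2 (Nat.le_add_right j i))) le_rfl) 1 hs
  have hindep_past_future := indep_iSup_of_disjoint (fun i => (hmeas i).comap_le)
    ((iIndepFun_iff_iIndep _ _ _).1 hindep) (Set.Iio_disjoint_Ici (le_refl j))
  rw [(Indep_iff _ _ _).1 hindep_past_future _ _ hpast hfuture,
    measure_ladderHeight_mem_eq_of_map_eq (fun i => hmeas _) hmeas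
      (map_precomp_eq_of_identDistrib hmeas hindep hident (add_right_injective j)) 1 hs]

end Law

lemma measure_le_tsum_mul_of_subset_iUnion_inter {Ω : Type*} {mΩ : MeasurableSpace Ω}
    {μ : Measure Ω} {E : Set Ω} {A : ℕ → ℕ → Set Ω} {C : ℕ → Set Ω} {p : ℝ≥0∞}
    (hE : E ⊆ ⋃ k, ⋃ j, A k j ∩ C j) (hA : ∀ k j, MeasurableSet (A k j))
    (hdisj : ∀ k, Pairwise (Function.onFun Disjoint (A k)))
    (hAC : ∀ k j, μ (A k j ∩ C j) = μ (A k j) * p) :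
    μ E ≤ ∑' k, μ (⋃ j, A k j) * p :=
  calc μ E ≤ ∑' k, ∑' j, μ (A k j ∩ C j) :=
        (measure_mono hE).trans <| (measure_iUnion_le _).trans <|
          ENNReal.tsum_le_tsum fun k => measure_iUnion_le _
    _ = ∑' k, μ (⋃ j, A k j) * p := by
        simp_rw [hAC, ENNReal.tsum_mul_right, measure_iUnion (hdisj _) (hA _)]

theorem overshoot_tail_bound_general
    {Ω : Type*} [MeasureSpace Ω]
    (X : ℕ → Ω → ℝ) (X0 : Ω → ℝ)
    (hmeas : ∀ n, Measurable (X n))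
    (hindep : iIndepFun X ℙ)
    (hident : ∀ n, IdentDistrib (X n) X0 ℙ ℙ)
    (m : ℝ)
    (t : ℝ) (x : ℝ) (hx0 : 0 < x) (hxm : x ≤ m) :
    ℙ {ω | exitTime X x ω ≠ ⊤ ∧ x + partialSum X (exitTime X x ω).toNat ω < -t} ≤
      potentialU X m * ℙ {ω | partialSum X (ladderEpoch X 1 ω) ω < -t} :=
  calc _ ≤ ∑' k, ℙ (⋃ j, ladderEvent X x k j) * ℙ {ω | ladderHeight X 1 ω ∈ Iio (-t)} :=
        measure_le_tsum_mul_of_subset_iUnion_inter (overshoot_subset_iUnion_ladderEvent hx0 t)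
          (fun k j => measurableSet_ladderEvent hmeas x k j) (pairwise_disjoint_ladderEvent x)
          fun k j => measure_ladderEvent_inter_shift hmeas hindep hident x k j measurableSet_Iio
    _ ≤ ∑' k, ℙ {ω | ladderHeight X k ω ∈ Ioc (-m) 0} * ℙ {ω | ladderHeight X 1 ω ∈ Iio (-t)} :=
        ENNReal.tsum_le_tsum fun k => by gcongr; exact iUnion_ladderEvent_subset hxm k
    _ = _ := ENNReal.tsum_mul_right

/-- for `0 < x ≤ m` and `t > 0`,
`P[x + S(τ_x) < −t] ≤ U(m) · P[S(ℓ₁) < −t]`. -/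
theorem overshoot_tail_bound
    {Ω : Type*} [MeasureSpace Ω] [IsProbabilityMeasure (ℙ : Measure Ω)]
    (X : ℕ → Ω → ℝ) (X0 : Ω → ℝ)
    (hmeas : ∀ n, Measurable (X n))
    (hindep : iIndepFun X ℙ)
    (hident : ∀ n, IdentDistrib (X n) X0 ℙ ℙ)
    (hsq : Integrable (fun ω => X0 ω ^ 2) ℙ)
    (hcent : ∫ ω, X0 ω ∂ℙ = 0)
    (m : ℝ) (hm : 0 < m) (hU : potentialU X m ≠ ⊤)
    (t : ℝ) (ht : 0 < t) (x : ℝ) (hx0 : 0 < x) (hxm : x ≤ m) :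
    ℙ {ω | exitTime X x ω ≠ ⊤ ∧ x + partialSum X (exitTime X x ω).toNat ω < -t} ≤
      potentialU X m * ℙ {ω | partialSum X (ladderEpoch X 1 ω) ω < -t} :=
  overshoot_tail_bound_general X X0 hmeas hindep hident m t x hx0 hxm
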